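/- arXiv:1708.03693 — 6 statements merged into one kernel-verified Lean document; each statement's English description precedes it below -/
import Mathlib

section
/- Let κ, λ, c ∈ ℝ² be fixed vectors with c·κ ≠ 0, and define the section σ: ℝ×ℝ → E(2) by σ(p,q) = (R(q)(κp + λ), q). Then for every element (r,θ) ∈ E(2) and every (p,q) ∈ ℝ×ℝ there exist a unique p′ ∈ ℝ and a vector x ∈ ℝ² with c·x = 0 such that (r,θ)·σ(p,q) = σ(p′, q+θ)·(x,0); explicitly p′ = p + (c·R(−q−θ)r)/(c·κ) and x = R(−q−θ)r + κ(p − p′). -/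
open Real

/-- Rotation of `ℝ²` by angle `θ`. -/
noncomputable def Rot (θ : ℝ) (v : ℝ × ℝ) : ℝ × ℝ :=
  (Real.cos θ * v.1 - Real.sin θ * v.2, Real.sin θ * v.1 + Real.cos θ * v.2)

/-- Euclidean scalar product of `ℝ²`. -/
def dot (a b : ℝ × ℝ) : ℝ := a.1 * b.1 + a.2 * b.2

/-- Composition law of the Euclidean group `E(2) = ℝ² ⋊ SO(2)`:
`(x₁,θ₁)(x₂,θ₂) = (x₁ + R(θ₁)x₂, θ₁ + θ₂)`. -/
noncomputable def mulE2 (g h : (ℝ × ℝ) × ℝ) : (ℝ × ℝ) × ℝ :=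
  (g.1 + Rot g.2 h.1, g.2 + h.2)

/-- The section `σ(p,q) = (R(q)(κp + λ), q)` of `E(2)` over the cylinder. -/
noncomputable def sec (κ lam : ℝ × ℝ) (p q : ℝ) : (ℝ × ℝ) × ℝ :=
  (Rot q (p • κ + lam), q)

/-! Comparing translation parts, `(r,θ)·σ(p,q) = σ(p′,q+θ)·(x,0)` says
`R(q+θ)x = r + R(q+θ)((p − p′)κ)`, which determines `x` from `p′`; the remaining condition
`c·x = 0` is then an affine equation in `p′` with leading coefficient `c·κ ≠ 0`. -/

lemma Rot_add (a : ℝ) (u v : ℝ × ℝ) : Rot a (u + v) = Rot a u + Rot a v := by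
  ext <;> simp only [Rot, Prod.fst_add, Prod.snd_add] <;> ring

lemma Rot_sub (a : ℝ) (u v : ℝ × ℝ) : Rot a (u - v) = Rot a u - Rot a v := by
  ext <;> simp only [Rot, Prod.fst_sub, Prod.snd_sub] <;> ring

lemma Rot_Rot (a b : ℝ) (v : ℝ × ℝ) : Rot a (Rot b v) = Rot (a + b) v := by
  ext <;> simp only [Rot, cos_add, sin_add] <;> ring

lemma Rot_zero_angle (v : ℝ × ℝ) : Rot 0 v = v := by
  simp [Rot]

lemma Rot_neg_Rot (a : ℝ) (v : ℝ × ℝ) : Rot (-a) (Rot a v) = v := by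
  rw [Rot_Rot, neg_add_cancel, Rot_zero_angle]

lemma Rot_Rot_neg (a : ℝ) (v : ℝ × ℝ) : Rot a (Rot (-a) v) = v := by
  simpa using Rot_neg_Rot (-a) v

lemma Rot_injective (a : ℝ) : Function.Injective (Rot a) :=
  Function.LeftInverse.injective (g := Rot (-a)) (Rot_neg_Rot a)

lemma dot_add (c u v : ℝ × ℝ) : dot c (u + v) = dot c u + dot c v := by
  simp only [dot, Prod.fst_add, Prod.snd_add]; ring

lemma dot_smul (c : ℝ × ℝ) (s : ℝ) (v : ℝ × ℝ) : dot c (s • v) = s * dot c v := by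
  simp only [dot, Prod.smul_fst, Prod.smul_snd, smul_eq_mul]; ring

lemma mulE2_sec_eq_sec_mulE2_iff (κ lam r x : ℝ × ℝ) (θ p q p' : ℝ) :
    mulE2 (r, θ) (sec κ lam p q) = mulE2 (sec κ lam p' (q + θ)) (x, 0) ↔
      x = Rot (-q - θ) r + (p - p') • κ := by
  have hsec : Rot (q + θ) (p • κ + lam) - Rot (q + θ) (p' • κ + lam)
      = Rot (q + θ) ((p - p') • κ) := by
    rw [← Rot_sub]; congr 1; module
  rw [← (Rot_injective (q + θ)).eq_iff, Rot_add, ← neg_add', Rot_Rot_neg, ← hsec]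
  simp only [mulE2, sec, Prod.mk.injEq, Rot_Rot, add_comm θ q, add_zero, and_true]
  constructor <;> intro h
  · rw [← add_sub_assoc, h]; abel
  · rw [h]; abel

lemma dot_add_smul_eq_zero_iff {c κ : ℝ × ℝ} (hc : dot c κ ≠ 0) (v : ℝ × ℝ) (p p' : ℝ) :
    dot c (v + (p - p') • κ) = 0 ↔ p' = p + dot c v / dot c κ := by
  rw [dot_add, dot_smul, ← sub_eq_iff_eq_add', eq_div_iff hc]
  constructor <;> intro h <;> linarith

/-- For fixed `κ, λ, c ∈ ℝ²` with `c·κ ≠ 0`, every `(r,θ) ∈ E(2)` and `(p,q)` admit a unique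
`p′ ∈ ℝ` and a vector `x ∈ ℝ²` with `c·x = 0` such that
`(r,θ)·σ(p,q) = σ(p′, q+θ)·(x,0)`; explicitly `p′ = p + (c·R(−q−θ)r)/(c·κ)` and
`x = R(−q−θ)r + (p − p′)κ`. -/
theorem section_decomposition (κ lam c : ℝ × ℝ) (hc : dot c κ ≠ 0)
    (r : ℝ × ℝ) (θ p q : ℝ) :
    (∃! p' : ℝ, ∃ x : ℝ × ℝ, dot c x = 0 ∧
        mulE2 (r, θ) (sec κ lam p q) = mulE2 (sec κ lam p' (q + θ)) (x, 0)) ∧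
    (dot c (Rot (-q - θ) r + (p - (p + dot c (Rot (-q - θ) r) / dot c κ)) • κ) = 0 ∧
      mulE2 (r, θ) (sec κ lam p q) =
        mulE2 (sec κ lam (p + dot c (Rot (-q - θ) r) / dot c κ) (q + θ))
          (Rot (-q - θ) r + (p - (p + dot c (Rot (-q - θ) r) / dot c κ)) • κ, 0)) := by
  set p₀ := p + dot c (Rot (-q - θ) r) / dot c κ with hp₀
  have hdot := (dot_add_smul_eq_zero_iff hc (Rot (-q - θ) r) p p₀).2 hp₀
  have hmul := (mulE2_sec_eq_sec_mulE2_iff κ lam r _ θ p q p₀).2 rfl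
  refine ⟨⟨_, ⟨_, hdot, hmul⟩, ?_⟩, hdot, hmul⟩
  rintro p' ⟨x, hx, h⟩
  rw [mulE2_sec_eq_sec_mulE2_iff] at h
  subst h
  exact (dot_add_smul_eq_zero_iff hc _ p p').1 hx
end

section
/- Let 0 ≤ γ < π and let η be admissible. Then the periodic convolution of E_{η;γ} with the 2π-periodic sawtooth function a satisfies, for every α ∈ [0, 2π): (E_{η;γ} ∗ a)(α) = a(α) + F_{η;γ}(α) − ∫_{γ−π}^{γ} q · E_{η;γ}(q) dq. In particular, E_{η;γ} ∗ a is a bounded continuous 2π-periodic real function (the 2π jumps of a at multiples of 2π are exactly cancelled by the jumps of F_{η;γ}), so the angle operator A_a, i.e., multiplication by E_{η;γ} ∗ a on L²(𝕊¹), is a bounded self-adjoint operator. -/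
open Real MeasureTheory

/-- The admissibility constant `c_η = (2π/κ) ∫_{γ−π}^{γ} |η(q)|²/sin(γ−q) dq`. -/
noncomputable def cEta (κ γ : ℝ) (η : ℝ → ℂ) : ℝ :=
  2 * π / κ * ∫ q in (γ - π)..γ, ‖η q‖ ^ 2 / Real.sin (γ - q)

/-- The 2π-periodic function `E_{η;γ}(α) = (2π/(κ c_η)) |η(α)|²/sin(γ−α)`. -/
noncomputable def Efun (κ γ : ℝ) (η : ℝ → ℂ) (α : ℝ) : ℝ :=
  2 * π / (κ * cEta κ γ η) * ‖η α‖ ^ 2 / Real.sin (γ - α)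

/-- The 2π-periodic sawtooth (angle) function `a(α) = α` for `α ∈ [0, 2π)`. -/
noncomputable def saw (α : ℝ) : ℝ := α - 2 * π * (⌊α / (2 * π)⌋ : ℝ)

/-- The 2π-periodic function `F_{η;γ}`. -/
noncomputable def Ffun (κ γ : ℝ) (η : ℝ → ℂ) (α : ℝ) : ℝ :=
  let a0 := α - 2 * π * (⌊α / (2 * π)⌋ : ℝ)
  if a0 < γ then 2 * π * ∫ q in a0..γ, Efun κ γ η q
  else if a0 ≤ π + γ then 0
  else -(2 * π) * ∫ q in (γ - π)..(a0 - 2 * π), Efun κ γ η q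

/-- The periodic convolution `(E_{η;γ} ∗ a)(α) = ∫₀^{2π} E_{η;γ}(α−q) a(q) dq`. -/
noncomputable def convEa (κ γ : ℝ) (η : ℝ → ℂ) (α : ℝ) : ℝ :=
  ∫ q in (0:ℝ)..(2 * π), Efun κ γ η (α - q) * saw q

open intervalIntegral Set

/-- A periodic function integrable on one period is interval integrable everywhere. -/
lemma periodic_intervalIntegrable_all {f : ℝ → ℝ} {T : ℝ} (hT : 0 < T)
    (hf : Function.Periodic f T) {a : ℝ} (h : IntervalIntegrable f volume (a) (a + T)) :
    ∀ c d, IntervalIntegrable f volume c d := by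
  have key : ∀ n : ℤ, IntervalIntegrable f volume (a + n * T) (a + n * T + T) := by
    intro n
    have h2 := h.comp_sub_right (n * T)
    have heq : (fun x => f (x - n * T)) = f := funext fun x => hf.sub_int_mul_eq n
    rw [heq] at h2
    convert h2 using 1 <;> ring
  have key2 : ∀ n : ℕ, IntervalIntegrable f volume (a - n * T) (a + n * T) := by
    intro n
    induction n with
    | zero => simpa using IntervalIntegrable.refl
    | succ n ih =>
      have hpos := key n
      have hneg := key (-(n + 1 : ℤ))
      have e1 : a + (-(n+1:ℤ) : ℤ) * T = a - (n+1 : ℕ) * T := by push_cast; ring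
      have e2 : a - ((n+1 : ℕ) : ℝ) * T + T = a - (n : ℕ) * T := by push_cast; ring
      have e3 : a + (n : ℤ) * T = a + (n : ℕ) * T := by push_cast; ring
      have e4 : a + ((n : ℕ) : ℝ) * T + T = a + ((n+1 : ℕ)) * T := by push_cast; ring
      rw [e1] at hneg
      rw [e2] at hneg
      rw [e3] at hpos
      rw [e4] at hpos
      exact (hneg.trans ih).trans hpos
  intro c d
  obtain ⟨n, hn⟩ := exists_nat_gt (max (|c - a| / T) (|d - a| / T))
  have hcb : |c - a| < n * T := by
    have := lt_of_le_of_lt (le_max_left _ _) hn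
    rwa [div_lt_iff₀ hT] at this
  have hdb : |d - a| < n * T := by
    have := lt_of_le_of_lt (le_max_right _ _) hn
    rwa [div_lt_iff₀ hT] at this
  have hca := abs_lt.1 hcb
  have hda := abs_lt.1 hdb
  refine (key2 n).mono_set ?_
  have hle : a - n * T ≤ a + n * T := by nlinarith [hT.le]
  rw [Set.uIcc_of_le hle]
  exact Set.uIcc_subset_Icc ⟨by linarith [hca.1], by linarith [hca.2]⟩
    ⟨by linarith [hda.1], by linarith [hda.2]⟩

lemma conj_intervalIntegral (f : ℝ → ℂ) (a b : ℝ) :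
    (starRingEnd ℂ) (∫ x in a..b, f x) = ∫ x in a..b, (starRingEnd ℂ) (f x) := by
  rw [intervalIntegral_eq_integral_uIoc, intervalIntegral_eq_integral_uIoc,
    starRingEnd_apply, star_smul, star_trivial]
  congr 1
  rw [← starRingEnd_apply, ← integral_conj]

/-- For `0 ≤ γ < π` and admissible `η`:
`(E_{η;γ} ∗ a)(α) = a(α) + F_{η;γ}(α) − ∫_{γ−π}^{γ} q E_{η;γ}(q) dq` for all `α ∈ [0,2π)`;
moreover `E_{η;γ} ∗ a` is a 2π-periodic, continuous, bounded real function, so the angle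
operator (multiplication by `E_{η;γ} ∗ a` on `L²(𝕊¹)`) is bounded and self-adjoint. -/
theorem angle_operator_convolution (κ γ : ℝ) (hκ : 0 < κ) (hγ0 : 0 ≤ γ) (hγπ : γ < π)
    (η : ℝ → ℂ) (hper : Function.Periodic η (2 * π))
    (hsupp : ∀ α ∈ Set.Ioo (γ - π) (γ + π), η α ≠ 0 → α ∈ Set.Ioo (γ - π) γ)
    (hint : IntervalIntegrable (fun q => ‖η q‖ ^ 2 / Real.sin (γ - q)) volume (γ - π) γ)
    (hpos : 0 < cEta κ γ η) :
    (∀ α ∈ Set.Ico (0:ℝ) (2 * π),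
        convEa κ γ η α = saw α + Ffun κ γ η α - ∫ q in (γ - π)..γ, q * Efun κ γ η q) ∧
    Function.Periodic (convEa κ γ η) (2 * π) ∧
    Continuous (convEa κ γ η) ∧
    (∃ M : ℝ, ∀ α, |convEa κ γ η α| ≤ M) ∧
    (∀ ψ φ : ℝ → ℂ,
        (∫ α in (0:ℝ)..(2 * π), star (ψ α) * (convEa κ γ η α : ℂ) * φ α) =
          star (∫ α in (0:ℝ)..(2 * π), star (φ α) * (convEa κ γ η α : ℂ) * ψ α)) := by
  have pi_pos := Real.pi_pos
  have two_pi_pos : (0:ℝ) < 2 * π := by linarith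
  -- Periodicity of `Efun`
  have hEper : Function.Periodic (Efun κ γ η) (2 * π) := by
    intro x
    unfold Efun
    rw [hper x, show γ - (x + 2 * π) = γ - x - 2 * π from by ring, Real.sin_sub_two_pi]
  -- `Efun` vanishes on `[γ, γ + π]`
  have hE0 : ∀ x ∈ Set.Icc γ (γ + π), Efun κ γ η x = 0 := by
    intro x hx
    rcases eq_or_lt_of_le hx.1 with h | h
    · unfold Efun; rw [← h, sub_self, Real.sin_zero, div_zero]
    · rcases eq_or_lt_of_le hx.2 with h2 | h2
      · unfold Efun
        rw [h2, show γ - (γ + π) = -π from by ring, Real.sin_neg, Real.sin_pi, neg_zero, div_zero]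
      · have hη : η x = 0 := by
          by_contra hne
          have hmem := hsupp x ⟨by linarith, h2⟩ hne
          exact absurd hmem.2 (not_lt.mpr h.le)
        unfold Efun; rw [hη]; simp
  have hE0' : ∀ x ∈ Set.Icc (γ - 2 * π) (γ - π), Efun κ γ η x = 0 := by
    intro x hx
    have h2 := hE0 (x + 2 * π) ⟨by linarith [hx.1], by linarith [hx.2]⟩
    rw [← hEper x]; exact h2
  -- Integrability of `Efun`
  have hEfun_eq : Efun κ γ η =
      fun q => 2 * π / (κ * cEta κ γ η) * (‖η q‖ ^ 2 / Real.sin (γ - q)) :=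
    funext fun q => mul_div_assoc _ _ _
  have hEint1 : IntervalIntegrable (Efun κ γ η) volume (γ - π) γ := by
    rw [hEfun_eq]; exact hint.const_mul _
  have hEintγ : IntervalIntegrable (Efun κ γ η) volume γ (γ - π + 2 * π) := by
    rw [intervalIntegrable_iff, Set.uIoc_of_le (by linarith)]
    exact (integrableOn_congr_fun
      (fun x hx => hE0 x ⟨hx.1.le, by linarith [hx.2]⟩) measurableSet_Ioc).mpr integrableOn_zero
  have hEwin : IntervalIntegrable (Efun κ γ η) volume (γ - π) (γ - π + 2 * π) :=
    hEint1.trans hEintγ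
  have hEint : ∀ a b, IntervalIntegrable (Efun κ γ η) volume a b :=
    periodic_intervalIntegrable_all two_pi_pos hEper hEwin
  have hPEint : ∀ a b, IntervalIntegrable (fun p => p * Efun κ γ η p) volume a b :=
    fun a b => (hEint a b).continuousOn_mul continuousOn_id
  -- the total mass of `Efun` over one period is 1
  have hIpos : 0 < ∫ q in (γ - π)..γ, ‖η q‖ ^ 2 / Real.sin (γ - q) := by
    by_contra hI
    push_neg at hI
    have h2 : (0:ℝ) < 2 * π / κ := div_pos two_pi_pos hκ
    have : 2 * π / κ * ∫ q in (γ - π)..γ, ‖η q‖ ^ 2 / Real.sin (γ - q) ≤ 0 :=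
      mul_nonpos_of_nonneg_of_nonpos h2.le hI
    unfold cEta at hpos; linarith
  have hE1' : (∫ q in (γ - π)..γ, Efun κ γ η q) = 1 := by
    rw [hEfun_eq, intervalIntegral.integral_const_mul]
    have hC : κ * cEta κ γ η = 2 * π * ∫ q in (γ - π)..γ, ‖η q‖ ^ 2 / Real.sin (γ - q) := by
      unfold cEta; field_simp
    rw [hC, div_mul_eq_mul_div]
    exact div_self (mul_pos two_pi_pos hIpos).ne'
  have hzeroE : ∀ a b, Set.uIcc a b ⊆ Set.Icc γ (γ + π) → (∫ p in a..b, Efun κ γ η p) = 0 := by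
    intro a b hsub
    have heq : Set.EqOn (fun p => Efun κ γ η p) (fun _ => (0:ℝ)) (Set.uIcc a b) :=
      fun p hp => hE0 p (hsub hp)
    rw [intervalIntegral.integral_congr heq]; simp
  have hzeroPE : ∀ a b, Set.uIcc a b ⊆ Set.Icc γ (γ + π) →
      (∫ p in a..b, p * Efun κ γ η p) = 0 := by
    intro a b hsub
    have heq : Set.EqOn (fun p => p * Efun κ γ η p) (fun _ => (0:ℝ)) (Set.uIcc a b) :=
      fun p hp => by simp [hE0 p (hsub hp)]
    rw [intervalIntegral.integral_congr heq]; simp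
  have hzeroPE' : ∀ a b, Set.uIcc a b ⊆ Set.Icc (γ - 2 * π) (γ - π) →
      (∫ p in a..b, p * Efun κ γ η p) = 0 := by
    intro a b hsub
    have heq : Set.EqOn (fun p => p * Efun κ γ η p) (fun _ => (0:ℝ)) (Set.uIcc a b) :=
      fun p hp => by simp [hE0' p (hsub hp)]
    rw [intervalIntegral.integral_congr heq]; simp
  have window : ∀ α : ℝ, (∫ x in (α - 2 * π)..α, Efun κ γ η x) = 1 := by
    intro α
    have h0 := hEper.intervalIntegral_add_eq (α - 2 * π) (γ - π)
    rw [show α - 2 * π + 2 * π = α from by ring] at h0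
    rw [h0, ← intervalIntegral.integral_add_adjacent_intervals (hEint (γ - π) γ)
      (hEint γ (γ - π + 2 * π)), hE1', hzeroE γ (γ - π + 2 * π) ?_]
    · norm_num
    · rw [Set.uIcc_of_le (by linarith)]
      exact fun x hx => ⟨hx.1, by linarith [hx.2]⟩
  -- floor lemma
  have hfloor : ∀ {x : ℝ}, 0 ≤ x → x < 2 * π → ⌊x / (2 * π)⌋ = 0 := by
    intro x h1 h2
    rw [Int.floor_eq_zero_iff]
    exact ⟨div_nonneg h1 two_pi_pos.le, (div_lt_one two_pi_pos).mpr h2⟩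
  -- the key convolution identity
  have hconv : ∀ α : ℝ, convEa κ γ η α = α - ∫ p in (α - 2 * π)..α, p * Efun κ γ η p := by
    intro α
    have step1 : convEa κ γ η α = ∫ q in (0:ℝ)..(2 * π), Efun κ γ η (α - q) * q := by
      unfold convEa
      apply intervalIntegral.integral_congr_ae
      filter_upwards [compl_mem_ae_iff.mpr (measure_singleton (2 * π))] with x hx hmem
      have hx' : x ≠ 2 * π := hx
      rw [Set.uIoc_of_le two_pi_pos.le] at hmem
      have h1 : 0 ≤ x := hmem.1.le
      have h2 : x < 2 * π := lt_of_le_of_ne hmem.2 hx'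
      rw [show saw x = x from by simp [saw, hfloor h1 h2]]
    have step2 : (∫ q in (0:ℝ)..(2 * π), Efun κ γ η (α - q) * q) =
        ∫ p in (α - 2 * π)..α, Efun κ γ η p * (α - p) := by
      have h := intervalIntegral.integral_comp_sub_left
        (a := (0:ℝ)) (b := 2 * π) (fun p => Efun κ γ η p * (α - p)) α
      rw [sub_zero] at h
      rw [← h]
      apply intervalIntegral.integral_congr
      intro x _
      simp [sub_sub_cancel]
    have step3 : (∫ p in (α - 2 * π)..α, Efun κ γ η p * (α - p)) =
        α - ∫ p in (α - 2 * π)..α, p * Efun κ γ η p := by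
      have h1 : IntervalIntegrable (fun p => α * Efun κ γ η p) volume (α - 2 * π) α :=
        (hEint _ _).const_mul α
      have heq : Set.EqOn (fun p => Efun κ γ η p * (α - p))
          (fun p => α * Efun κ γ η p - p * Efun κ γ η p) (Set.uIcc (α - 2 * π) α) :=
        fun p _ => by ring
      rw [intervalIntegral.integral_congr heq, intervalIntegral.integral_sub h1 (hPEint _ _),
        intervalIntegral.integral_const_mul, window α, mul_one]
    rw [step1, step2, step3]
  -- translation identities
  have T1 : ∀ α : ℝ, (∫ x in (α - 2 * π)..(γ - 2 * π), x * Efun κ γ η x) =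
      (∫ x in α..γ, x * Efun κ γ η x) - 2 * π * ∫ x in α..γ, Efun κ γ η x := by
    intro α
    have h := intervalIntegral.integral_comp_sub_right
      (a := α) (b := γ) (fun y => y * Efun κ γ η y) (2 * π)
    rw [← h]
    have heq : Set.EqOn (fun x => (x - 2 * π) * Efun κ γ η (x - 2 * π))
        (fun x => x * Efun κ γ η x - 2 * π * Efun κ γ η x) (Set.uIcc α γ) := by
      intro x _
      simp only
      rw [hEper.sub_eq x]
      ring
    rw [intervalIntegral.integral_congr heq,
      intervalIntegral.integral_sub (hPEint _ _) ((hEint _ _).const_mul _),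
      intervalIntegral.integral_const_mul]
  have T2 : ∀ α : ℝ, (∫ x in (γ + π)..α, x * Efun κ γ η x) =
      (∫ x in (γ - π)..(α - 2 * π), x * Efun κ γ η x) +
        2 * π * ∫ x in (γ - π)..(α - 2 * π), Efun κ γ η x := by
    intro α
    have h := intervalIntegral.integral_comp_add_right
      (a := γ - π) (b := α - 2 * π) (fun y => y * Efun κ γ η y) (2 * π)
    rw [show γ - π + 2 * π = γ + π from by ring, show α - 2 * π + 2 * π = α from by ring] at h
    rw [← h]
    have heq : Set.EqOn (fun x => (x + 2 * π) * Efun κ γ η (x + 2 * π))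
        (fun x => x * Efun κ γ η x + 2 * π * Efun κ γ η x) (Set.uIcc (γ - π) (α - 2 * π)) := by
      intro x _
      simp only
      rw [hEper x]
      ring
    rw [intervalIntegral.integral_congr heq,
      intervalIntegral.integral_add (hPEint _ _) ((hEint _ _).const_mul _),
      intervalIntegral.integral_const_mul]
  -- periodicity of the convolution
  have hper2 : Function.Periodic (convEa κ γ η) (2 * π) := by
    intro x
    unfold convEa
    apply intervalIntegral.integral_congr
    intro q _
    show Efun κ γ η (x + 2 * π - q) * saw q = Efun κ γ η (x - q) * saw q
    rw [show x + 2 * π - q = (x - q) + 2 * π from by ring, hEper (x - q)]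
  -- continuity
  have hcont : Continuous (convEa κ γ η) := by
    have hΦ : Continuous (fun x => ∫ p in (0:ℝ)..x, p * Efun κ γ η p) :=
      intervalIntegral.continuous_primitive hPEint 0
    have hrepr : convEa κ γ η = fun α =>
        α - ((∫ p in (0:ℝ)..α, p * Efun κ γ η p) -
          ∫ p in (0:ℝ)..(α - 2 * π), p * Efun κ γ η p) := by
      funext α
      rw [hconv α]
      have h := intervalIntegral.integral_add_adjacent_intervals
        (hPEint 0 (α - 2 * π)) (hPEint (α - 2 * π) α)
      linarith [h]
    rw [hrepr]
    exact continuous_id.sub (hΦ.sub (hΦ.comp (continuous_id.sub continuous_const)))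
  refine ⟨?_, hper2, hcont, ?_, ?_⟩
  · -- the explicit formula
    intro α hα
    have hfα : ⌊α / (2 * π)⌋ = 0 := hfloor hα.1 hα.2
    have hsawα : saw α = α := by simp [saw, hfα]
    rcases lt_or_ge α γ with hc1 | hc1
    · have hFα : Ffun κ γ η α = 2 * π * ∫ q in α..γ, Efun κ γ η q := by
        simp [Ffun, hfα, hc1]
      rw [hconv α, hsawα, hFα]
      have s1 := intervalIntegral.integral_add_adjacent_intervals
        (hPEint (α - 2 * π) (γ - 2 * π)) (hPEint (γ - 2 * π) (γ - π))
      have s2 := intervalIntegral.integral_add_adjacent_intervals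
        (hPEint (α - 2 * π) (γ - π)) (hPEint (γ - π) α)
      have s3 := intervalIntegral.integral_add_adjacent_intervals
        (hPEint (γ - π) α) (hPEint α γ)
      have z1 : (∫ p in (γ - 2 * π)..(γ - π), p * Efun κ γ η p) = 0 := by
        apply hzeroPE'
        rw [Set.uIcc_of_le (by linarith)]
      have t1 := T1 α
      linarith [s1, s2, s3, t1, z1]
    · rcases le_or_gt α (π + γ) with hc2 | hc2
      · have hFα : Ffun κ γ η α = 0 := by
          simp [Ffun, hfα, not_lt.mpr hc1, hc2]
        rw [hconv α, hsawα, hFα]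
        have s1 := intervalIntegral.integral_add_adjacent_intervals
          (hPEint (α - 2 * π) (γ - π)) (hPEint (γ - π) γ)
        have s2 := intervalIntegral.integral_add_adjacent_intervals
          (hPEint (α - 2 * π) γ) (hPEint γ α)
        have z1 : (∫ p in (α - 2 * π)..(γ - π), p * Efun κ γ η p) = 0 := by
          apply hzeroPE'
          rw [Set.uIcc_of_le (by linarith)]
          exact Set.Icc_subset_Icc (by linarith) le_rfl
        have z2 : (∫ p in γ..α, p * Efun κ γ η p) = 0 := by
          apply hzeroPE
          rw [Set.uIcc_of_le (by linarith)]
          exact Set.Icc_subset_Icc le_rfl (by linarith)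
        linarith [s1, s2, z1, z2]
      · have hFα : Ffun κ γ η α =
            -(2 * π) * ∫ q in (γ - π)..(α - 2 * π), Efun κ γ η q := by
          simp only [Ffun, hfα, Int.cast_zero, mul_zero, sub_zero]
          rw [if_neg (by linarith), if_neg (by linarith)]
        rw [hconv α, hsawα, hFα]
        have s1 := intervalIntegral.integral_add_adjacent_intervals
          (hPEint (α - 2 * π) γ) (hPEint γ (γ + π))
        have s2 := intervalIntegral.integral_add_adjacent_intervals
          (hPEint (α - 2 * π) (γ + π)) (hPEint (γ + π) α)
        have s3 := intervalIntegral.integral_add_adjacent_intervals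
          (hPEint (γ - π) (α - 2 * π)) (hPEint (α - 2 * π) γ)
        have z1 : (∫ p in γ..(γ + π), p * Efun κ γ η p) = 0 := by
          apply hzeroPE
          rw [Set.uIcc_of_le (by linarith)]
        have t2 := T2 α
        linarith [s1, s2, s3, z1, t2]
  · -- boundedness
    obtain ⟨M, hM⟩ := (isCompact_Icc :
      IsCompact (Set.Icc (0:ℝ) (2 * π))).exists_bound_of_continuousOn hcont.continuousOn
    refine ⟨M, fun α => ?_⟩
    set n := ⌊α / (2 * π)⌋ with hn
    have h1 : (n : ℝ) * (2 * π) ≤ α := by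
      have := Int.floor_le (α / (2 * π))
      rwa [le_div_iff₀ two_pi_pos] at this
    have h2 : α < ((n : ℝ) + 1) * (2 * π) := by
      have := Int.lt_floor_add_one (α / (2 * π))
      rwa [div_lt_iff₀ two_pi_pos] at this
    have hβ : α - (n : ℝ) * (2 * π) ∈ Set.Icc (0:ℝ) (2 * π) :=
      ⟨by linarith, by nlinarith⟩
    have e := hper2.sub_int_mul_eq (x := α) n
    calc |convEa κ γ η α| = ‖convEa κ γ η (α - (n : ℝ) * (2 * π))‖ := by
          rw [e, Real.norm_eq_abs]
      _ ≤ M := hM _ hβ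
  · -- symmetry (self-adjointness)
    intro ψ φ
    rw [← starRingEnd_apply, conj_intervalIntegral]
    apply intervalIntegral.integral_congr
    intro x _
    show star (ψ x) * (convEa κ γ η x : ℂ) * φ x =
      (starRingEnd ℂ) (star (φ x) * (convEa κ γ η x : ℂ) * ψ x)
    rw [map_mul, map_mul, starRingEnd_apply, star_star, Complex.conj_ofReal, starRingEnd_apply]
    ring
end

section
/- Let 0 ≤ γ < π and let η be admissible with E_{η;γ} continuous on ℝ. Then the convolution E_{η;γ} ∗ a with the sawtooth function a is differentiable at every α ∈ ℝ with α ∉ 2πℤ, with derivative d/dα (E_{η;γ} ∗ a)(α) = 1 − 2π E_{η;γ}(α). -/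
open Real MeasureTheory

/-! After the substitution `u = α - q`, the convolution of a continuous `T`-periodic `f` with
`q ↦ q` on `[0, T]` is `α ∫₀ᵀ f - ∫_{α-T}^{α} u f(u) du`; by the fundamental theorem of calculus
its derivative is `∫₀ᵀ f - (α f(α) - (α - T) f(α - T)) = ∫₀ᵀ f - T f(α)`. The sawtooth agrees
with `q ↦ q` on `[0, 2π)`, and `∫₀^{2π} E_{η;γ} = 1`: `E_{η;γ}` vanishes on `[γ, γ + π]`, and on
`(γ - π, γ)` the normalisation by `c_η` makes its integral `1`. -/

theorem Function.Periodic.integral_comp_sub_mul_id {f : ℝ → ℝ} {T : ℝ} (hf : Continuous f)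
    (hT : Function.Periodic f T) (x : ℝ) :
    ∫ q in (0:ℝ)..T, f (x - q) * q =
      x * (∫ u in (0:ℝ)..T, f u) - ((∫ u in (0:ℝ)..x, u * f u) - ∫ u in (0:ℝ)..(x - T), u * f u) := by
  have hsubst : ∫ q in (0:ℝ)..T, f (x - q) * q = ∫ u in (x - T)..x, f u * (x - u) := by
    simpa only [sub_sub_cancel, sub_zero] using
      intervalIntegral.integral_comp_sub_left (fun u => f u * (x - u)) x (a := 0) (b := T)
  have hperiod : ∫ u in (x - T)..x, f u = ∫ u in (0:ℝ)..T, f u := by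
    simpa only [sub_add_cancel, zero_add] using hT.intervalIntegral_add_eq (x - T) 0
  have hid : Continuous fun u => u * f u := continuous_id.mul hf
  have hsplit : ∫ u in (x - T)..x, f u * (x - u) = ∫ u in (x - T)..x, (x * f u - u * f u) :=
    intervalIntegral.integral_congr fun u _ => by ring
  rw [hsubst, hsplit, intervalIntegral.integral_sub ((hf.const_mul x).intervalIntegrable _ _)
    (hid.intervalIntegrable _ _), intervalIntegral.integral_const_mul, hperiod,
    intervalIntegral.integral_interval_sub_left (hid.intervalIntegrable _ _)
    (hid.intervalIntegrable _ _)]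

theorem Function.Periodic.hasDerivAt_integral_comp_sub_mul_id {f : ℝ → ℝ} {T : ℝ}
    (hf : Continuous f) (hT : Function.Periodic f T) (α : ℝ) :
    HasDerivAt (fun x => ∫ q in (0:ℝ)..T, f (x - q) * q) ((∫ u in (0:ℝ)..T, f u) - T * f α) α := by
  have hid : Continuous fun u => u * f u := continuous_id.mul hf
  have hprim (x : ℝ) : HasDerivAt (fun y => ∫ u in (0:ℝ)..y, u * f u) (x * f x) x :=
    (hid.integral_hasStrictDerivAt 0 x).hasDerivAt
  have hderiv : HasDerivAt
      (fun x => x * (∫ u in (0:ℝ)..T, f u) - ((∫ u in (0:ℝ)..x, u * f u) - ∫ u in (0:ℝ)..(x - T), u * f u))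
      (1 * (∫ u in (0:ℝ)..T, f u) - (α * f α - (α - T) * f (α - T))) α :=
    ((hasDerivAt_id' α).mul_const _).sub ((hprim α).sub ((hprim (α - T)).comp_sub_const α T))
  rw [funext (hT.integral_comp_sub_mul_id hf)]
  convert hderiv using 1
  rw [hT.sub_eq α]
  ring

theorem saw_eq_self {q : ℝ} (hq : q ∈ Set.Ico 0 (2 * π)) : saw q = q := by
  have hfloor : ⌊q / (2 * π)⌋ = 0 := by
    rw [Int.floor_eq_zero_iff]
    exact ⟨div_nonneg hq.1 two_pi_pos.le, (div_lt_one two_pi_pos).mpr hq.2⟩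
  simp [saw, hfloor]

theorem integral_mul_saw (g : ℝ → ℝ) :
    ∫ q in (0:ℝ)..(2 * π), g q * saw q = ∫ q in (0:ℝ)..(2 * π), g q * q :=
  intervalIntegral.integral_congr_Ioo_of_le two_pi_pos.le fun _ hq => by
    rw [saw_eq_self (Set.Ioo_subset_Ico_self hq)]

section Efun

variable {κ γ : ℝ} {η : ℝ → ℂ}

theorem Efun_periodic (hper : Function.Periodic η (2 * π)) :
    Function.Periodic (Efun κ γ η) (2 * π) := by
  intro x
  rw [Efun, Efun, hper x, show γ - (x + 2 * π) = γ - x - 2 * π by ring, sin_sub_two_pi]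

theorem Efun_eq_zero_of_mem_Icc
    (hsupp : ∀ α ∈ Set.Ioo (γ - π) (γ + π), η α ≠ 0 → α ∈ Set.Ioo (γ - π) γ)
    {x : ℝ} (hx : x ∈ Set.Icc γ (γ + π)) : Efun κ γ η x = 0 := by
  rcases hx.2.eq_or_lt with rfl | hlt
  · simp [Efun, show γ - (γ + π) = -π by ring]
  · have hη : η x = 0 := by
      by_contra hne
      exact (hsupp x ⟨by linarith [hx.1, pi_pos], hlt⟩ hne).2.not_ge hx.1
    simp [Efun, hη]

theorem integral_Efun_of_cEta_ne_zero (hc : cEta κ γ η ≠ 0) :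
    ∫ x in (γ - π)..γ, Efun κ γ η x = 1 := by
  set I := ∫ q in (γ - π)..γ, ‖η q‖ ^ 2 / Real.sin (γ - q)
  have hcI : cEta κ γ η = 2 * π / κ * I := rfl
  have hκ : κ ≠ 0 := by rintro rfl; simp [hcI] at hc
  have hI : I ≠ 0 := by rintro hI; simp [hcI, hI] at hc
  simp only [Efun, mul_div_assoc, intervalIntegral.integral_const_mul]
  rw [hcI]
  field_simp
  rfl

theorem integral_Efun_period (hper : Function.Periodic η (2 * π))
    (hsupp : ∀ α ∈ Set.Ioo (γ - π) (γ + π), η α ≠ 0 → α ∈ Set.Ioo (γ - π) γ)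
    (hc : cEta κ γ η ≠ 0) (hEc : Continuous (Efun κ γ η)) :
    ∫ x in (0:ℝ)..(2 * π), Efun κ γ η x = 1 := by
  have hshift : ∫ x in (0:ℝ)..(2 * π), Efun κ γ η x = ∫ x in (γ - π)..(γ + π), Efun κ γ η x := by
    simpa only [zero_add, show γ - π + 2 * π = γ + π by ring] using
      (Efun_periodic hper).intervalIntegral_add_eq 0 (γ - π)
  have hvanish : ∫ x in γ..(γ + π), Efun κ γ η x = 0 := by
    rw [intervalIntegral.integral_congr (g := fun _ => 0), intervalIntegral.integral_zero]
    rw [Set.uIcc_of_le (by linarith [pi_pos])]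
    exact fun x hx => Efun_eq_zero_of_mem_Icc hsupp hx
  rw [hshift, ← intervalIntegral.integral_add_adjacent_intervals (hEc.intervalIntegrable _ γ)
    (hEc.intervalIntegrable _ _), hvanish, add_zero, integral_Efun_of_cEta_ne_zero hc]

end Efun

theorem convolution_derivative_general (κ γ : ℝ)
    (η : ℝ → ℂ) (hper : Function.Periodic η (2 * π))
    (hsupp : ∀ α ∈ Set.Ioo (γ - π) (γ + π), η α ≠ 0 → α ∈ Set.Ioo (γ - π) γ)
    (hpos : 0 < cEta κ γ η)
    (hEc : Continuous (Efun κ γ η)) :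
    ∀ α : ℝ, (∀ k : ℤ, α ≠ 2 * π * k) →
      HasDerivAt (convEa κ γ η) (1 - 2 * π * Efun κ γ η α) α := by
  intro α _
  have hconv : convEa κ γ η = fun x => ∫ q in (0:ℝ)..(2 * π), Efun κ γ η (x - q) * q :=
    funext fun x => integral_mul_saw _
  rw [hconv, ← integral_Efun_period hper hsupp hpos.ne' hEc]
  exact (Efun_periodic hper).hasDerivAt_integral_comp_sub_mul_id hEc α

/-- For `0 ≤ γ < π` and admissible `η` with `E_{η;γ}` continuous, the convolution
`E_{η;γ} ∗ a` is differentiable at every `α ∉ 2πℤ`, with derivative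
`1 − 2π E_{η;γ}(α)`. -/
theorem convolution_derivative (κ γ : ℝ) (hκ : 0 < κ) (hγ0 : 0 ≤ γ) (hγπ : γ < π)
    (η : ℝ → ℂ) (hper : Function.Periodic η (2 * π))
    (hsupp : ∀ α ∈ Set.Ioo (γ - π) (γ + π), η α ≠ 0 → α ∈ Set.Ioo (γ - π) γ)
    (hint : IntervalIntegrable (fun q => ‖η q‖ ^ 2 / Real.sin (γ - q)) volume (γ - π) γ)
    (hpos : 0 < cEta κ γ η)
    (hEc : Continuous (Efun κ γ η)) :
    ∀ α : ℝ, (∀ k : ℤ, α ≠ 2 * π * k) →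
      HasDerivAt (convEa κ γ η) (1 - 2 * π * Efun κ γ η α) α :=
  convolution_derivative_general κ γ η hper hsupp hpos hEc
end

section
/- Let η be a real-valued, continuously differentiable, admissible fiducial vector with ∫₀^{2π}|η(α)|² dα = 1, and let A_p be the operator (A_p ψ)(α) = −i (c₂/(κ c₁)) ψ′(α) − λ a ψ(α), where c_ν := ∫_{γ−π}^{γ} |η(q)|²/(sin(γ−q))^ν dq and a := (1/(κ c₁)) ∫_{γ−π}^{γ} sin(ζ−q)|η(q)|²/(sin(γ−q))² dq. Then the lower symbol of A_p is affine in p and independent of q: ⟨η_{p,q}, A_p η_{p,q}⟩ = (c₂/c₁) · (∫₀^{2π} |η(α)|² sin(γ−α) dα) · p + λ (c₂/(κ c₁)) · (∫₀^{2π} |η(α)|² sin(ζ−α) dα) − λ a. -/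
open Real MeasureTheory

/-- The coherent state (for a real fiducial vector `η`):
`η_{p,q}(α) = exp(i[κp cos(q−α+γ) + λ cos(q−α+ζ)]) · η(α−q)`. -/
noncomputable def CSr (κ lam γ ζ : ℝ) (η : ℝ → ℝ) (p q α : ℝ) : ℂ :=
  Complex.exp (Complex.I *
      (κ * p * Real.cos (q - α + γ) + lam * Real.cos (q - α + ζ))) * (η (α - q) : ℂ)

/-- `c₁ = ∫_{γ−π}^{γ} |η(q)|²/sin(γ−q) dq`. -/
noncomputable def c1 (γ : ℝ) (η : ℝ → ℝ) : ℝ :=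
  ∫ q in (γ - π)..γ, η q ^ 2 / Real.sin (γ - q)

/-- `c₂ = ∫_{γ−π}^{γ} |η(q)|²/(sin(γ−q))² dq`. -/
noncomputable def c2 (γ : ℝ) (η : ℝ → ℝ) : ℝ :=
  ∫ q in (γ - π)..γ, η q ^ 2 / Real.sin (γ - q) ^ 2

/-- `a = (1/(κ c₁)) ∫_{γ−π}^{γ} sin(ζ−q) |η(q)|²/(sin(γ−q))² dq`. -/
noncomputable def aconst (κ γ ζ : ℝ) (η : ℝ → ℝ) : ℝ :=
  1 / (κ * c1 γ η) * ∫ q in (γ - π)..γ, Real.sin (ζ - q) * η q ^ 2 / Real.sin (γ - q) ^ 2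

/-! Write `η_{p,q} = e^{iθ} η(· - q)` with a real phase `θ`, and let `C = c₂ / (κ c₁)`. Then
`conj η_{p,q} · η_{p,q}' = i θ' η(· - q)² + (η η')(· - q)`, so the momentum operator has the
real density `(C θ' - λ a) η(· - q)²` up to `-i C (η²/2)'(· - q)`, which integrates to zero over a
period. The derivative `θ'` is a combination of `sin (γ - (α - q))` and `sin (ζ - (α - q))`, so
translating by `q` removes `q` altogether, and `C κ = c₂ / c₁` gives the coefficient of `p`. -/

open Complex in
theorem hasDerivAt_exp_I_mul_mul_ofReal {θ f : ℝ → ℝ} {θ' f' x : ℝ}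
    (hθ : HasDerivAt θ θ' x) (hf : HasDerivAt f f' x) :
    HasDerivAt (fun t => cexp (I * θ t) * f t) (cexp (I * θ x) * (I * θ' * f x + f')) x :=
  (((hθ.ofReal_comp.const_mul I).cexp).mul hf.ofReal_comp).congr_deriv (by ring)

open Complex ComplexConjugate in
theorem star_exp_I_mul_mul_momentum {θ f : ℝ → ℝ} {θ' f' x : ℝ}
    (hθ : HasDerivAt θ θ' x) (hf : HasDerivAt f f' x) (C A : ℝ) :
    star (cexp (I * θ x) * f x) *
        (-I * C * deriv (fun t => cexp (I * θ t) * f t) x - A * (cexp (I * θ x) * f x)) =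
      (((C * θ' - A) * f x ^ 2 : ℝ) : ℂ) - I * (C * (f x * f') : ℝ) := by
  have hunit : conj (cexp (I * θ x)) * cexp (I * θ x) = 1 := by
    rw [← Complex.exp_conj, ← Complex.exp_add]
    simp
  rw [(hasDerivAt_exp_I_mul_mul_ofReal hθ hf).deriv, star_mul', RCLike.star_def,
    conj_ofReal]
  push_cast
  linear_combination ((C * θ' - A) * f x ^ 2 - I * C * f x * f') * hunit
    - C * θ' * f x ^ 2 * conj (cexp (I * θ x)) * cexp (I * θ x) * I_sq

theorem Function.Periodic.deriv {𝕜 F : Type*} [NontriviallyNormedField 𝕜] [NormedAddCommGroup F]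
    [NormedSpace 𝕜 F] {f : 𝕜 → F} {T : 𝕜} (hf : Function.Periodic f T) :
    Function.Periodic (deriv f) T := fun x => by
  rw [← deriv_comp_add_const, show (fun y => f (y + T)) = f from funext hf]

theorem Function.Periodic.intervalIntegral_comp_sub_eq {E : Type*} [NormedAddCommGroup E]
    [NormedSpace ℝ E] {f : ℝ → E} {T : ℝ} (hf : Function.Periodic f T) (t s : ℝ) :
    ∫ x in t..t + T, f (x - s) = ∫ x in t..t + T, f x := by
  rw [intervalIntegral.integral_comp_sub_right, add_sub_right_comm, hf.intervalIntegral_add_eq]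

theorem integral_mul_deriv_self {f : ℝ → ℝ} (hf : ContDiff ℝ 1 f) (a b : ℝ) :
    ∫ x in a..b, f x * deriv f x = (f b ^ 2 - f a ^ 2) / 2 := by
  have hderiv (x : ℝ) : HasDerivAt (fun y => f y ^ 2 / 2) (f x * deriv f x) x :=
    (((hf.differentiable one_ne_zero x).hasDerivAt.pow 2).div_const 2).congr_deriv (by ring)
  rw [intervalIntegral.integral_eq_sub_of_hasDerivAt (fun x _ => hderiv x)
    ((hf.continuous.mul (hf.continuous_deriv le_rfl)).intervalIntegrable a b)]
  ring

section CoherentState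

variable (κ lam γ ζ p q : ℝ) {η : ℝ → ℝ}

theorem CSr_eq_exp_I_mul :
    CSr κ lam γ ζ η p q = fun α => Complex.exp (Complex.I *
      ((κ * p * cos (q - α + γ) + lam * cos (q - α + ζ) : ℝ) : ℂ)) * (η (α - q) : ℂ) := by
  funext α
  simp only [CSr, Complex.ofReal_add, Complex.ofReal_mul]

theorem star_CSr_mul_momentum (hη : Differentiable ℝ η) (C A α : ℝ) :
    star (CSr κ lam γ ζ η p q α) * (-Complex.I * C * deriv (CSr κ lam γ ζ η p q) α -
        A * CSr κ lam γ ζ η p q α) =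
      (((C * (κ * p * sin (γ - (α - q)) + lam * sin (ζ - (α - q))) - A) * η (α - q) ^ 2 : ℝ) : ℂ)
        - Complex.I * (C * (η (α - q) * deriv η (α - q)) : ℝ) := by
  have hphase : HasDerivAt (fun t => κ * p * cos (q - t + γ) + lam * cos (q - t + ζ))
      (κ * p * sin (γ - (α - q)) + lam * sin (ζ - (α - q))) α := by
    have hcos (c : ℝ) : HasDerivAt (fun t => cos (q - t + c)) (sin (c - (α - q))) α :=
      (((hasDerivAt_id α).const_sub q).add_const c).cos.congr_deriv (by
        rw [show c - (α - q) = q - α + c by ring]; simp)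
    exact ((hcos γ).const_mul (κ * p)).add ((hcos ζ).const_mul lam)
  have hamp : HasDerivAt (fun t => η (t - q)) (deriv η (α - q)) α :=
    (hη (α - q)).hasDerivAt.comp_sub_const α q
  rw [CSr_eq_exp_I_mul]
  exact star_exp_I_mul_mul_momentum hphase hamp C A

theorem integral_star_CSr_mul_momentum (hη : ContDiff ℝ 1 η)
    (hper : Function.Periodic η (2 * π)) (C A : ℝ) :
    ∫ α in 0..2 * π, star (CSr κ lam γ ζ η p q α) *
        (-Complex.I * C * deriv (CSr κ lam γ ζ η p q) α - A * CSr κ lam γ ζ η p q α) =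
      ((∫ β in 0..2 * π, (C * (κ * p * sin (γ - β) + lam * sin (ζ - β)) - A) * η β ^ 2 : ℝ) :
        ℂ) := by
  set G : ℝ → ℝ := fun β => (C * (κ * p * sin (γ - β) + lam * sin (ζ - β)) - A) * η β ^ 2
  set H : ℝ → ℝ := fun β => C * (η β * deriv η β)
  have hG : Continuous G := by have := hη.continuous; fun_prop
  have hH : Continuous H := continuous_const.mul (hη.continuous.mul (hη.continuous_deriv le_rfl))
  have hperiodic : Function.Periodic (fun β => (G β : ℂ) - Complex.I * H β) (2 * π) := by
    intro β
    simp only [G, H, hper β, hper.deriv β, (sin_periodic.const_sub γ) β,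
      (sin_periodic.const_sub ζ) β]
  have hη_ends : η (2 * π) = η 0 := by simpa using hper 0
  calc _ = ∫ α in 0..2 * π, (G (α - q) : ℂ) - Complex.I * H (α - q) :=
        intervalIntegral.integral_congr fun α _ =>
          star_CSr_mul_momentum κ lam γ ζ p q hη.differentiable_one C A α
    _ = ∫ β in 0..2 * π, (G β : ℂ) - Complex.I * H β := by
        simpa only [zero_add] using hperiodic.intervalIntegral_comp_sub_eq 0 q
    _ = (∫ β in 0..2 * π, G β : ℝ) - Complex.I * (∫ β in 0..2 * π, H β : ℝ) := by
        rw [intervalIntegral.integral_sub, intervalIntegral.integral_const_mul,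
          intervalIntegral.integral_ofReal, intervalIntegral.integral_ofReal]
        · exact (Complex.continuous_ofReal.comp hG).intervalIntegrable _ _
        · exact (continuous_const.mul (Complex.continuous_ofReal.comp hH)).intervalIntegrable _ _
    _ = _ := by
        rw [intervalIntegral.integral_const_mul, integral_mul_deriv_self hη, hη_ends]
        simp

end CoherentState

theorem lower_symbol_of_momentum_general
    (κ lam γ ζ : ℝ) (hκ : 0 < κ)
    (η : ℝ → ℝ) (hηC1 : ContDiff ℝ 1 η) (hηper : Function.Periodic η (2 * π))
    (hnorm : (∫ α in (0:ℝ)..(2 * π), η α ^ 2) = 1) :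
    ∀ p q : ℝ,
      (∫ α in (0:ℝ)..(2 * π), star (CSr κ lam γ ζ η p q α) *
          (-Complex.I * ((c2 γ η / (κ * c1 γ η) : ℝ) : ℂ) * deriv (CSr κ lam γ ζ η p q) α -
            ((lam * aconst κ γ ζ η : ℝ) : ℂ) * CSr κ lam γ ζ η p q α)) =
        ((c2 γ η / c1 γ η * (∫ α in (0:ℝ)..(2 * π), η α ^ 2 * Real.sin (γ - α)) * p +
            lam * (c2 γ η / (κ * c1 γ η)) *
              (∫ α in (0:ℝ)..(2 * π), η α ^ 2 * Real.sin (ζ - α)) -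
            lam * aconst κ γ ζ η : ℝ) : ℂ) := by
  intro p q
  rw [integral_star_CSr_mul_momentum κ lam γ ζ p q hηC1 hηper]
  congr 1
  have hint {f : ℝ → ℝ} (hf : Continuous f) : IntervalIntegrable f volume 0 (2 * π) :=
    hf.intervalIntegrable _ _
  have hexpand (C A β : ℝ) : (C * (κ * p * sin (γ - β) + lam * sin (ζ - β)) - A) * η β ^ 2 =
      C * κ * p * (η β ^ 2 * sin (γ - β)) + C * lam * (η β ^ 2 * sin (ζ - β)) - A * η β ^ 2 := by
    ring
  have hη := hηC1.continuous
  simp_rw [hexpand]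
  rw [intervalIntegral.integral_sub (hint (by fun_prop)) (hint (by fun_prop)),
    intervalIntegral.integral_add (hint (by fun_prop)) (hint (by fun_prop)),
    intervalIntegral.integral_const_mul, intervalIntegral.integral_const_mul,
    intervalIntegral.integral_const_mul, hnorm, mul_comm κ (c1 γ η), ← div_div,
    div_mul_cancel₀ _ hκ.ne']
  ring

/-- The lower symbol of the momentum operator `A_p ψ = −i (c₂/(κ c₁)) ψ′ − λ a ψ` on the
coherent states is affine in `p` and independent of `q`:
`⟨η_{p,q}, A_p η_{p,q}⟩ = (c₂/c₁)(∫₀^{2π} |η|² sin(γ−·)) p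
  + λ (c₂/(κ c₁))(∫₀^{2π} |η|² sin(ζ−·)) − λ a`. -/
theorem lower_symbol_of_momentum
    (κ lam γ ζ : ℝ) (hκ : 0 < κ) (hlam : 0 ≤ lam)
    (η : ℝ → ℝ) (hηC1 : ContDiff ℝ 1 η) (hηper : Function.Periodic η (2 * π))
    (hsupp : ∀ α ∈ Set.Ioo (γ - π) (γ + π), η α ≠ 0 → α ∈ Set.Ioo (γ - π) γ)
    (hint : IntervalIntegrable (fun q => η q ^ 2 / Real.sin (γ - q)) volume (γ - π) γ)
    (hc1pos : 0 < c1 γ η)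
    (hnorm : (∫ α in (0:ℝ)..(2 * π), η α ^ 2) = 1) :
    ∀ p q : ℝ,
      (∫ α in (0:ℝ)..(2 * π), star (CSr κ lam γ ζ η p q α) *
          (-Complex.I * ((c2 γ η / (κ * c1 γ η) : ℝ) : ℂ) * deriv (CSr κ lam γ ζ η p q) α -
            ((lam * aconst κ γ ζ η : ℝ) : ℂ) * CSr κ lam γ ζ η p q α)) =
        ((c2 γ η / c1 γ η * (∫ α in (0:ℝ)..(2 * π), η α ^ 2 * Real.sin (γ - α)) * p +
            lam * (c2 γ η / (κ * c1 γ η)) *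
              (∫ α in (0:ℝ)..(2 * π), η α ^ 2 * Real.sin (ζ - α)) -
            lam * aconst κ γ ζ η : ℝ) : ℂ) :=
  lower_symbol_of_momentum_general κ lam γ ζ hκ η hηC1 hηper hnorm
end

section
/- Let w: ℝ → [0,∞) be integrable with ∫_ℝ w(p) dp = 1, and suppose N(p) := ∑_{n∈ℤ} w(p−n) satisfies 0 < N(p) < ∞ for every p ∈ ℝ. Then the coherent states |p,q⟩ with components ⟨e_n|p,q⟩ = N(p)^{−1/2} √(w(p−n)) e^{−inq} resolve the identity on ℓ²(ℤ) with respect to the measure N(p) dp dq/(2π): for all m, n ∈ ℤ, ∫_ℝ ∫₀^{2π} ⟨e_m|p,q⟩ · conj(⟨e_n|p,q⟩) · N(p) dp dq/(2π) = δ_{mn}. -/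
open Real MeasureTheory

/-- `N(p) = ∑_{n∈ℤ} w(p−n)`. -/
noncomputable def Nw (w : ℝ → ℝ) (p : ℝ) : ℝ := ∑' n : ℤ, w (p - n)

/-- The components of the circle coherent state:
`⟨e_n|p,q⟩ = N(p)^{−1/2} √(w(p−n)) e^{−inq}`. -/
noncomputable def csC (w : ℝ → ℝ) (p q : ℝ) (n : ℤ) : ℂ :=
  ((Real.sqrt (Nw w p))⁻¹ * Real.sqrt (w (p - n)) : ℝ) *
    Complex.exp (-Complex.I * n * q)

/-- Resolution of the identity for the circle coherent states on `ℓ²(ℤ)` with respect to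
the measure `N(p) dp dq/(2π)`: for all `m, n ∈ ℤ`,
`∫_ℝ ∫₀^{2π} ⟨e_m|p,q⟩ conj(⟨e_n|p,q⟩) N(p) dp dq/(2π) = δ_{mn}`. -/
theorem circle_CS_resolution_of_identity
    (w : ℝ → ℝ) (hw0 : ∀ p, 0 ≤ w p) (hwint : Integrable w)
    (hw1 : (∫ p : ℝ, w p) = 1)
    (hsum : ∀ p : ℝ, Summable fun n : ℤ => w (p - n))
    (hNpos : ∀ p : ℝ, 0 < Nw w p) :
    ∀ m n : ℤ,
      (∫ p : ℝ, ∫ q in (0:ℝ)..(2 * π),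
          csC w p q m * star (csC w p q n) * (Nw w p : ℝ) / (2 * π : ℝ)) =
        if m = n then 1 else 0 := by
  intro m n
  have hπ : (2 * π : ℝ) ≠ 0 := by positivity
  have hpt : ∀ p q : ℝ,
      csC w p q m * star (csC w p q n) * (Nw w p : ℝ) / (2 * π : ℝ)
        = ((((Real.sqrt (Nw w p))⁻¹ * Real.sqrt (w (p - m))) *
            ((Real.sqrt (Nw w p))⁻¹ * Real.sqrt (w (p - n))) *
             Nw w p / (2 * π) : ℝ) : ℂ) *
          Complex.exp (Complex.I * ((n : ℂ) - (m : ℂ)) * q) := by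
    intro p q
    simp only [csC]
    have h1 : star (Complex.exp (-Complex.I * (n : ℂ) * (q : ℂ)))
        = Complex.exp (Complex.I * (n : ℂ) * (q : ℂ)) := by
      rw [show star (Complex.exp (-Complex.I * (n : ℂ) * (q : ℂ)))
          = (starRingEnd ℂ) (Complex.exp (-Complex.I * (n : ℂ) * (q : ℂ))) from rfl,
        ← Complex.exp_conj]
      congr 1
      simp
    have h2 : star ((((Real.sqrt (Nw w p))⁻¹ * Real.sqrt (w (p - n)) : ℝ)) : ℂ)
        = ((((Real.sqrt (Nw w p))⁻¹ * Real.sqrt (w (p - n)) : ℝ)) : ℂ) :=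
      Complex.conj_ofReal _
    rw [star_mul', h1, h2]
    have hE : Complex.exp (-Complex.I * (m : ℂ) * (q : ℂ)) *
        Complex.exp (Complex.I * (n : ℂ) * (q : ℂ))
        = Complex.exp (Complex.I * ((n : ℂ) - (m : ℂ)) * q) := by
      rw [← Complex.exp_add]
      congr 1
      ring
    rw [← hE]
    push_cast
    ring
  have hinner : ∀ p : ℝ,
      (∫ q in (0:ℝ)..(2 * π),
          csC w p q m * star (csC w p q n) * (Nw w p : ℝ) / (2 * π : ℝ))
        = if m = n then (w (p - m) : ℂ) else 0 := by
    intro p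
    rw [intervalIntegral.integral_congr (g := fun q =>
        ((((Real.sqrt (Nw w p))⁻¹ * Real.sqrt (w (p - m))) *
            ((Real.sqrt (Nw w p))⁻¹ * Real.sqrt (w (p - n))) *
             Nw w p / (2 * π) : ℝ) : ℂ) *
          Complex.exp (Complex.I * ((n : ℂ) - (m : ℂ)) * q)) (fun q _ => hpt p q)]
    rw [intervalIntegral.integral_const_mul]
    by_cases h : m = n
    · subst h
      simp only [sub_self, mul_zero, zero_mul, Complex.exp_zero, if_pos rfl]
      rw [if_pos trivial, intervalIntegral.integral_const, sub_zero,
        Complex.real_smul, mul_one, ← Complex.ofReal_mul, Complex.ofReal_inj]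
      have hN := hNpos p
      have hsq : Real.sqrt (w (p - m)) * Real.sqrt (w (p - m)) = w (p - m) :=
        Real.mul_self_sqrt (hw0 _)
      have hsqN : Real.sqrt (Nw w p) * Real.sqrt (Nw w p) = Nw w p :=
        Real.mul_self_sqrt hN.le
      have hsN : Real.sqrt (Nw w p) ≠ 0 := by positivity
      field_simp
      nlinarith [hsq, hsqN]
    · rw [if_neg h]
      have hc : (Complex.I * ((n : ℂ) - (m : ℂ))) ≠ 0 :=
        mul_ne_zero Complex.I_ne_zero
          (sub_ne_zero.mpr (by exact_mod_cast Ne.symm h))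
      rw [integral_exp_mul_complex hc]
      rw [show Complex.I * ((n : ℂ) - (m : ℂ)) * (((2 * π : ℝ)) : ℂ)
          = ((n - m : ℤ) : ℂ) * (2 * (π : ℂ) * Complex.I) by push_cast; ring]
      rw [Complex.exp_int_mul_two_pi_mul_I]
      simp
  by_cases h : m = n
  · subst h
    have hinner' : ∀ p : ℝ,
        (∫ q in (0:ℝ)..(2 * π),
            csC w p q m * star (csC w p q m) * (Nw w p : ℝ) / (2 * π : ℝ))
          = (w (p - m) : ℂ) := fun p => (hinner p).trans (if_pos rfl)
    rw [integral_congr_ae (Filter.Eventually.of_forall hinner'), if_pos rfl]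
    have hcast : (∫ a : ℝ, ((w (a - (m : ℝ)) : ℝ) : ℂ))
        = (((∫ a : ℝ, w (a - (m : ℝ))) : ℝ) : ℂ) := integral_ofReal
    rw [hcast, integral_sub_right_eq_self w (m : ℝ), hw1]
    norm_num
  · have hinner' : ∀ p : ℝ,
        (∫ q in (0:ℝ)..(2 * π),
            csC w p q m * star (csC w p q n) * (Nw w p : ℝ) / (2 * π : ℝ))
          = (0 : ℂ) := fun p => (hinner p).trans (if_neg h)
    rw [integral_congr_ae (Filter.Eventually.of_forall hinner'), if_neg h,
      integral_zero]
end

section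
/- Let w: ℝ → [0,∞) be integrable with ∫_ℝ w(p) dp = 1, w even (w(p) = w(−p)), ∫_ℝ |p| w(p) dp < ∞, and suppose N(p) := ∑_{n∈ℤ} w(p−n) satisfies 0 < N(p) < ∞ for every p. Then the coherent-state quantisation of the momentum function f(p,q) = p is the number operator: for all m, n ∈ ℤ, ∫_ℝ ∫₀^{2π} p · ⟨e_m|p,q⟩ · conj(⟨e_n|p,q⟩) · N(p) dp dq/(2π) = n δ_{mn}. -/
open Real MeasureTheory

/-!
The `q`-integral of `⟨e_m|p,q⟩ conj ⟨e_n|p,q⟩` is an integral of `e^{i(n-m)q}` over a full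
period, so it vanishes off the diagonal, and on the diagonal the factor `N(p)` cancels the
normalisation, leaving `∫ p w(p - n) dp`. Substituting `p ↦ p + n` turns this into
`∫ p w(p) dp + n ∫ w = n`, the first moment vanishing because `w` is even.
-/

theorem integral_exp_I_mul_int_mul (k : ℤ) :
    (∫ q in (0:ℝ)..(2 * π), Complex.exp (Complex.I * k * q)) =
      if k = 0 then ((2 * π : ℝ) : ℂ) else 0 := by
  split_ifs with hk
  · simp [hk]
  have hc : Complex.I * k ≠ 0 := mul_ne_zero Complex.I_ne_zero (by exact_mod_cast hk)
  rw [integral_exp_mul_complex hc]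
  have hperiod : Complex.exp (Complex.I * k * (2 * π)) = 1 := by
    rw [← Complex.exp_int_mul_two_pi_mul_I k]
    ring_nf
  simp [hperiod]

theorem csC_mul_star_csC (w : ℝ → ℝ) (p q : ℝ) (m n : ℤ) (hN : 0 ≤ Nw w p) :
    csC w p q m * star (csC w p q n) =
      ((Real.sqrt (w (p - m)) * Real.sqrt (w (p - n)) / Nw w p : ℝ) : ℂ) *
        Complex.exp (Complex.I * ((n - m : ℤ) : ℂ) * q) := by
  have hnorm : (Real.sqrt (Nw w p))⁻¹ * (Real.sqrt (Nw w p))⁻¹ = (Nw w p)⁻¹ := by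
    rw [← mul_inv, Real.mul_self_sqrt hN]
  have hstar : star (Complex.exp (-Complex.I * n * q)) = Complex.exp (Complex.I * n * q) := by
    rw [Complex.star_def, ← Complex.exp_conj]
    simp [Complex.conj_I]
  have hexp : Complex.exp (-Complex.I * m * q) * Complex.exp (Complex.I * n * q) =
      Complex.exp (Complex.I * ((n - m : ℤ) : ℂ) * q) := by
    rw [← Complex.exp_add]
    push_cast
    ring_nf
  rw [csC, csC, star_mul', hstar, Complex.star_def, Complex.conj_ofReal, ← hexp, div_eq_mul_inv,
    ← hnorm]
  push_cast
  ring

theorem integral_csC_mul_star_csC (w : ℝ → ℝ) (hw0 : ∀ p, 0 ≤ w p) (p : ℝ) (m n : ℤ)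
    (hN : 0 ≤ Nw w p) :
    (∫ q in (0:ℝ)..(2 * π), csC w p q m * star (csC w p q n)) =
      if m = n then ((w (p - n) / Nw w p * (2 * π) : ℝ) : ℂ) else 0 := by
  simp_rw [csC_mul_star_csC w p _ m n hN]
  rw [intervalIntegral.integral_const_mul, integral_exp_I_mul_int_mul]
  simp only [sub_eq_zero, eq_comm (a := n)]
  split_ifs with hmn
  · subst hmn
    rw [Real.mul_self_sqrt (hw0 _)]
    push_cast
    ring
  · simp

theorem integral_id_mul_eq_zero_of_even (w : ℝ → ℝ) (hweven : ∀ p, w (-p) = w p) :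
    (∫ p : ℝ, p * w p) = 0 := by
  have h := integral_neg_eq_self (fun p => p * w p) (volume : Measure ℝ)
  simp only [hweven, neg_mul, integral_neg] at h
  linarith

theorem integral_mul_comp_sub_eq_of_even (w : ℝ → ℝ) (hw0 : ∀ p, 0 ≤ w p) (hwint : Integrable w)
    (hw1 : (∫ p : ℝ, w p) = 1) (hweven : ∀ p, w (-p) = w p)
    (hwmom : Integrable fun p : ℝ => |p| * w p) (c : ℝ) :
    (∫ p : ℝ, p * w (p - c)) = c := by
  have hmoment : Integrable fun p : ℝ => p * w p := by
    refine hwmom.mono' (aestronglyMeasurable_id.mul hwint.aestronglyMeasurable)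
      (Filter.Eventually.of_forall fun p => ?_)
    rw [Real.norm_eq_abs, abs_mul, abs_of_nonneg (hw0 p)]
  calc (∫ p : ℝ, p * w (p - c))
      = ∫ p : ℝ, (p + c) * w p := by
        rw [← integral_add_right_eq_self _ c]
        simp
    _ = (∫ p : ℝ, p * w p) + c * ∫ p : ℝ, w p := by
        simp_rw [add_mul]
        rw [integral_add hmoment (hwint.const_mul c), integral_const_mul]
    _ = c := by rw [integral_id_mul_eq_zero_of_even w hweven, hw1]; ring

theorem circle_CS_quantisation_of_momentum_general
    (w : ℝ → ℝ) (hw0 : ∀ p, 0 ≤ w p) (hwint : Integrable w)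
    (hw1 : (∫ p : ℝ, w p) = 1)
    (hweven : ∀ p, w (-p) = w p)
    (hwmom : Integrable fun p : ℝ => |p| * w p)
    (hNpos : ∀ p : ℝ, 0 < Nw w p) :
    ∀ m n : ℤ,
      (∫ p : ℝ, ∫ q in (0:ℝ)..(2 * π),
          (p : ℂ) * csC w p q m * star (csC w p q n) * (Nw w p : ℝ) / (2 * π : ℝ)) =
        if m = n then (n : ℂ) else 0 := by
  intro m n
  have hinner : ∀ p : ℝ,
      (∫ q in (0:ℝ)..(2 * π),
          (p : ℂ) * csC w p q m * star (csC w p q n) * (Nw w p : ℝ) / (2 * π : ℝ)) =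
        if m = n then ((p * w (p - n) : ℝ) : ℂ) else 0 := by
    intro p
    simp_rw [mul_assoc (p : ℂ), mul_div_assoc]
    rw [intervalIntegral.integral_const_mul, intervalIntegral.integral_mul_const,
      integral_csC_mul_star_csC w hw0 p m n (hNpos p).le]
    split_ifs
    · have hN : (Nw w p : ℂ) ≠ 0 := by exact_mod_cast (hNpos p).ne'
      push_cast
      field_simp
    · simp
  simp_rw [hinner]
  split_ifs
  · rw [integral_complex_ofReal, integral_mul_comp_sub_eq_of_even w hw0 hwint hw1 hweven hwmom,
      Complex.ofReal_intCast]
  · simp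

/-- For an even probability density `w` with finite first absolute moment, the
coherent-state quantisation of the momentum function `f(p,q) = p` is the number
operator: for all `m, n ∈ ℤ`,
`∫_ℝ ∫₀^{2π} p ⟨e_m|p,q⟩ conj(⟨e_n|p,q⟩) N(p) dp dq/(2π) = n δ_{mn}`. -/
theorem circle_CS_quantisation_of_momentum
    (w : ℝ → ℝ) (hw0 : ∀ p, 0 ≤ w p) (hwint : Integrable w)
    (hw1 : (∫ p : ℝ, w p) = 1)
    (hweven : ∀ p, w (-p) = w p)
    (hwmom : Integrable fun p : ℝ => |p| * w p)
    (hsum : ∀ p : ℝ, Summable fun n : ℤ => w (p - n))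
    (hNpos : ∀ p : ℝ, 0 < Nw w p) :
    ∀ m n : ℤ,
      (∫ p : ℝ, ∫ q in (0:ℝ)..(2 * π),
          (p : ℂ) * csC w p q m * star (csC w p q n) * (Nw w p : ℝ) / (2 * π : ℝ)) =
        if m = n then (n : ℂ) else 0 :=
  circle_CS_quantisation_of_momentum_general w hw0 hwint hw1 hweven hwmom hNpos
end
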